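/- arXiv:2310.11740 — 5 statements merged into one kernel-verified Lean document; each statement's English description precedes it below -/
import Mathlib

section
/- For 1<α<2 and any integer k≥1, the fractional centered difference coefficient c_k = (-1)^k Γ(α+1)/[Γ(α/2-k+1)Γ(α/2+k+1)] satisfies c_k ≤ 0, while c_0 = Γ(α+1)/Γ(α/2+1)^2 ≥ 0. -/
/-- The fractional centered difference coefficient
`c_k = (-1)^k Γ(α+1) / (Γ(α/2 - k + 1) Γ(α/2 + k + 1))`. -/
noncomputable def fcdCoeff (α : ℝ) (k : ℤ) : ℝ :=
  (-1 : ℝ) ^ k * Real.Gamma (α + 1) /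
    (Real.Gamma (α / 2 - k + 1) * Real.Gamma (α / 2 + k + 1))

theorem stmt0 (α : ℝ) (hα1 : 1 < α) (hα2 : α < 2) :
    (∀ k : ℤ, 1 ≤ k → fcdCoeff α k ≤ 0) ∧
    fcdCoeff α 0 = Real.Gamma (α + 1) / (Real.Gamma (α / 2 + 1)) ^ 2 ∧
    0 ≤ fcdCoeff α 0 := by
  have hπ : (0:ℝ) < Real.pi := Real.pi_pos
  have hGα : 0 < Real.Gamma (α + 1) := Real.Gamma_pos_of_pos (by linarith)
  have hs : 0 < Real.sin (Real.pi * (α / 2)) := by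
    apply Real.sin_pos_of_pos_of_lt_pi
    · positivity
    · nlinarith [Real.pi_pos]
  refine ⟨?_, ?_, ?_⟩
  · intro k hk
    set x : ℝ := α / 2 - k + 1 with hx
    have h1x : (1:ℝ) - x = k - α / 2 := by ring
    have hG1x : 0 < Real.Gamma (1 - x) := by
      apply Real.Gamma_pos_of_pos
      rw [h1x]
      have : (1:ℝ) ≤ (k:ℝ) := by exact_mod_cast hk
      linarith
    have hG2 : 0 < Real.Gamma (α / 2 + k + 1) := by
      apply Real.Gamma_pos_of_pos
      have : (1:ℝ) ≤ (k:ℝ) := by exact_mod_cast hk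
      linarith
    have hsin : Real.sin (Real.pi * x) = (-1:ℝ)^(1-k) * Real.sin (Real.pi * (α/2)) := by
      have : Real.pi * x = ((1-k : ℤ) : ℝ) * Real.pi + Real.pi * (α/2) := by
        push_cast; ring
      have hcos : Real.cos (((1-k:ℤ):ℝ) * Real.pi) = (-1:ℝ)^(1-k) := by
        simpa using Real.cos_int_mul_pi_sub 0 (1-k)
      rw [this, Real.sin_add, Real.sin_int_mul_pi, hcos, zero_mul, zero_add]
    have hprod := Real.Gamma_mul_Gamma_one_sub x
    have hGx : Real.Gamma x = Real.pi / (Real.sin (Real.pi * x) * Real.Gamma (1 - x)) := by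
      have hsne : Real.sin (Real.pi * x) ≠ 0 := by
        rw [hsin]
        exact mul_ne_zero (zpow_ne_zero _ (by norm_num)) (ne_of_gt hs)
      field_simp at hprod ⊢
      linarith [hprod]
    have hkey : fcdCoeff α k =
        -(Real.sin (Real.pi * (α/2)) * Real.Gamma (1 - x) * Real.Gamma (α + 1)) /
          (Real.pi * Real.Gamma (α / 2 + k + 1)) := by
      rw [fcdCoeff, ← hx, hGx, hsin]
      have hm : (-1:ℝ)^k * (-1:ℝ)^(1-k) = -1 := by
        rw [← zpow_add₀ (by norm_num : (-1:ℝ) ≠ 0)]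
        norm_num
      field_simp
      linear_combination Real.sin (α * Real.pi / 2) * hm
    rw [hkey]
    apply div_nonpos_of_nonpos_of_nonneg
    · nlinarith [mul_pos (mul_pos hs hG1x) hGα]
    · positivity
  · simp [fcdCoeff, sq]
  · have h0 : fcdCoeff α 0 = Real.Gamma (α + 1) / (Real.Gamma (α / 2 + 1)) ^ 2 := by
      simp [fcdCoeff, sq]
    rw [h0]
    positivity
end

section
/- For 1<α<2, the sum over all nonzero integers k of |c_k| equals c_0, i.e., ∑_{k≠0} |c_k| = c_0. -/
open Real Filter Finset

lemma fcd_coeff_succ {α : ℝ} (hα1 : 1 < α) (hα2 : α < 2) (n : ℕ) :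
    fcdCoeff α ((n : ℤ) + 1) =
      -(Real.Gamma (α + 1) * Real.sin (π * (α / 2)) / π *
        (Real.Gamma ((n : ℝ) + 1 - α / 2) / Real.Gamma ((n : ℝ) + 2 + α / 2))) := by
  have hs : 0 < Real.sin (π * (α / 2)) := by
    apply Real.sin_pos_of_pos_of_lt_pi
    · nlinarith [Real.pi_pos]
    · nlinarith [Real.pi_pos]
  have hG1 : 0 < Real.Gamma ((n : ℝ) + 1 - α / 2) :=
    Real.Gamma_pos_of_pos (by nlinarith [Nat.cast_nonneg (α := ℝ) n])
  have hG2 : 0 < Real.Gamma ((n : ℝ) + 2 + α / 2) :=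
    Real.Gamma_pos_of_pos (by nlinarith [Nat.cast_nonneg (α := ℝ) n])
  have hsin : Real.sin (π * (α / 2 - n)) = (-1) ^ n * Real.sin (π * (α / 2)) := by
    have h := Real.sin_add_int_mul_pi (π * (α / 2)) (-(n : ℤ))
    push_cast at h
    have harg : π * (α / 2) + -(n : ℝ) * π = π * (α / 2 - n) := by ring
    rw [harg] at h
    rw [h]
    congr 1
    rw [zpow_neg, ← inv_zpow, inv_neg, inv_one, zpow_natCast]
  have hrefl := Real.Gamma_mul_Gamma_one_sub (α / 2 - n)
  have harg2 : (1 : ℝ) - (α / 2 - n) = (n : ℝ) + 1 - α / 2 := by ring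
  rw [harg2, hsin] at hrefl
  -- Γ (α/2 - n) = π / ((-1)^n * sin) / Γ (n+1-α/2)
  have hΓval : Real.Gamma (α / 2 - n) =
      π / ((-1) ^ n * Real.sin (π * (α / 2))) / Real.Gamma ((n : ℝ) + 1 - α / 2) := by
    have hne : ((-1:ℝ)) ^ n * Real.sin (π * (α / 2)) ≠ 0 := by positivity
    rw [div_div, eq_div_iff (by positivity)]
    rw [eq_div_iff hne] at hrefl
    linear_combination hrefl
  have harg3 : α / 2 - (((n : ℤ) + 1 : ℤ) : ℝ) + 1 = α / 2 - n := by push_cast; ring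
  have harg4 : α / 2 + (((n : ℤ) + 1 : ℤ) : ℝ) + 1 = (n : ℝ) + 2 + α / 2 := by push_cast; ring
  have hpow : (-1 : ℝ) ^ ((n : ℤ) + 1) = -(-1 : ℝ) ^ n := by
    rw [zpow_add_one₀ (by norm_num), zpow_natCast]; ring
  have hd : ((-1 : ℝ) ^ n) * ((-1 : ℝ) ^ n) = 1 := by
    rw [← pow_add, ← two_mul, pow_mul]; norm_num
  rw [fcdCoeff, harg3, harg4, hpow, hΓval]
  have hπ := Real.pi_pos
  rcases Nat.even_or_odd n with h | h <;> rw [h.neg_one_pow] <;> field_simp <;> ring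

lemma fcd_neg (α : ℝ) (k : ℤ) : fcdCoeff α (-k) = fcdCoeff α k := by
  unfold fcdCoeff
  push_cast
  rw [show α / 2 - -(k : ℝ) + 1 = α / 2 + k + 1 by ring,
    show α / 2 + -(k : ℝ) + 1 = α / 2 - k + 1 by ring,
    zpow_neg, ← inv_zpow, inv_neg, inv_one]
  ring

lemma fcd_key {α : ℝ} (hα1 : 1 < α) (hα2 : α < 2) :
    Real.Gamma (α + 1) * Real.sin (π * (α / 2)) / π *
      ((Real.Gamma (1 - α / 2) / Real.Gamma (1 + α / 2)) / α) * 2 = fcdCoeff α 0 := by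
  have hπ := Real.pi_pos
  have hs : 0 < Real.sin (π * (α / 2)) := by
    apply Real.sin_pos_of_pos_of_lt_pi
    · nlinarith
    · nlinarith
  have hΓβ : 0 < Real.Gamma (α / 2) := Real.Gamma_pos_of_pos (by linarith)
  have hΓA : 0 < Real.Gamma (α + 1) := Real.Gamma_pos_of_pos (by linarith)
  have hrefl := Real.Gamma_mul_Gamma_one_sub (α / 2)
  have h1mβ : Real.Gamma (1 - α / 2) = π / (Real.sin (π * (α / 2)) * Real.Gamma (α / 2)) := by
    rw [eq_div_iff (by positivity)]
    rw [eq_div_iff (by positivity)] at hrefl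
    linear_combination hrefl
  have h1β : Real.Gamma (1 + α / 2) = (α / 2) * Real.Gamma (α / 2) := by
    rw [show (1 : ℝ) + α / 2 = α / 2 + 1 by ring, Real.Gamma_add_one (by positivity)]
  have h0 : fcdCoeff α 0 = Real.Gamma (α + 1) / ((α / 2 * Real.Gamma (α / 2)) *
      (α / 2 * Real.Gamma (α / 2))) := by
    simp only [fcdCoeff, Int.cast_zero, sub_zero, add_zero, zpow_zero, one_mul, ← h1β]
    rw [show α / 2 + 1 = 1 + α / 2 by ring]
  have hα0 : α ≠ 0 := by positivity
  rw [h0, h1mβ, h1β]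
  set A := Real.Gamma (α + 1) with hA
  set S := Real.sin (π * (α / 2)) with hS
  set G := Real.Gamma (α / 2) with hG
  field_simp

theorem stmt2 (α : ℝ) (hα1 : 1 < α) (hα2 : α < 2) :
    HasSum (fun k : {k : ℤ // k ≠ 0} => |fcdCoeff α (k : ℤ)|) (fcdCoeff α 0) := by
  have hπ := Real.pi_pos
  have hs : 0 < Real.sin (π * (α / 2)) := by
    apply Real.sin_pos_of_pos_of_lt_pi
    · nlinarith
    · nlinarith
  have hΓA : 0 < Real.Gamma (α + 1) := Real.Gamma_pos_of_pos (by linarith)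
  set C := Real.Gamma (α + 1) * Real.sin (π * (α / 2)) / π with hC
  have hCpos : 0 < C := by positivity
  set t : ℕ → ℝ := fun n => Real.Gamma ((n : ℝ) + 1 - α / 2) / Real.Gamma ((n : ℝ) + 1 + α / 2)
    with ht
  set r : ℕ → ℝ := fun n => Real.Gamma ((n : ℝ) + 1 - α / 2) / Real.Gamma ((n : ℝ) + 2 + α / 2)
    with hr
  have hnum : ∀ n : ℕ, (0:ℝ) < (n : ℝ) + 1 - α / 2 := fun n => by
    have := Nat.cast_nonneg (α := ℝ) n; nlinarith
  have hden : ∀ n : ℕ, (0:ℝ) < (n : ℝ) + 1 + α / 2 := fun n => by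
    have := Nat.cast_nonneg (α := ℝ) n; nlinarith
  have hrpos : ∀ n, 0 ≤ r n := fun n => by
    have h1 := Real.Gamma_pos_of_pos (hnum n)
    have h2 := Real.Gamma_pos_of_pos (show (0:ℝ) < (n : ℝ) + 2 + α / 2 by
      have := Nat.cast_nonneg (α := ℝ) n; nlinarith)
    exact le_of_lt (div_pos h1 h2)
  have htpos : ∀ n, 0 ≤ t n := fun n =>
    le_of_lt (div_pos (Real.Gamma_pos_of_pos (hnum n)) (Real.Gamma_pos_of_pos (hden n)))
  -- recurrences
  have hrec1 : ∀ n : ℕ, Real.Gamma ((n : ℝ) + 2 + α / 2)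
      = ((n : ℝ) + 1 + α / 2) * Real.Gamma ((n : ℝ) + 1 + α / 2) := fun n => by
    rw [show (n : ℝ) + 2 + α / 2 = ((n : ℝ) + 1 + α / 2) + 1 by ring,
      Real.Gamma_add_one (hden n).ne']
  have hrec2 : ∀ n : ℕ, Real.Gamma ((n : ℝ) + 2 - α / 2)
      = ((n : ℝ) + 1 - α / 2) * Real.Gamma ((n : ℝ) + 1 - α / 2) := fun n => by
    rw [show (n : ℝ) + 2 - α / 2 = ((n : ℝ) + 1 - α / 2) + 1 by ring,
      Real.Gamma_add_one (hnum n).ne']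
  have htsucc : ∀ n : ℕ, t (n + 1)
      = t n * (((n : ℝ) + 1 - α / 2) / ((n : ℝ) + 1 + α / 2)) := fun n => by
    simp only [ht]
    push_cast
    rw [show (n : ℝ) + 1 + 1 - α / 2 = (n : ℝ) + 2 - α / 2 by ring,
      show (n : ℝ) + 1 + 1 + α / 2 = (n : ℝ) + 2 + α / 2 by ring, hrec1, hrec2]
    field_simp
  have tele : ∀ n : ℕ, α * r n = t n - t (n + 1) := fun n => by
    rw [htsucc]
    simp only [ht, hr]
    rw [hrec1]
    have h1 := (Real.Gamma_pos_of_pos (hnum n)).ne'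
    have h2 := (Real.Gamma_pos_of_pos (hden n)).ne'
    field_simp
    ring
  have hsum : ∀ N : ℕ, ∑ i ∈ Finset.range N, r i = (t 0 - t N) / α := by
    intro N
    induction N with
    | zero => simp
    | succ N ih =>
      rw [Finset.sum_range_succ, ih]
      have := tele N
      field_simp
      linarith [this]
  have hdec : ∀ n : ℕ, t n ≤ t 0 / ((n : ℝ) + 1) := by
    intro n
    induction n with
    | zero => simp
    | succ n ih =>
      have hcast : ((n + 1 : ℕ) : ℝ) + 1 = (n : ℝ) + 2 := by push_cast; ring
      rw [hcast, htsucc]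
      have hρ : ((n : ℝ) + 1 - α / 2) / ((n : ℝ) + 1 + α / 2) ≤ ((n : ℝ) + 1) / ((n : ℝ) + 2) := by
        rw [div_le_div_iff₀ (hden n) (by positivity)]
        have := Nat.cast_nonneg (α := ℝ) n
        nlinarith
      have hρ0 : 0 ≤ ((n : ℝ) + 1 - α / 2) / ((n : ℝ) + 1 + α / 2) :=
        le_of_lt (div_pos (hnum n) (hden n))
      have h2 : t n * (((n : ℝ) + 1 - α / 2) / ((n : ℝ) + 1 + α / 2))
          ≤ (t 0 / ((n : ℝ) + 1)) * (((n : ℝ) + 1) / ((n : ℝ) + 2)) :=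
        mul_le_mul ih hρ hρ0 (div_nonneg (htpos 0) (by positivity))
      have heq : t 0 / ((n : ℝ) + 1) * (((n : ℝ) + 1) / ((n : ℝ) + 2)) = t 0 / ((n : ℝ) + 2) := by
        rw [div_mul_div_comm, mul_comm (t 0) ((n : ℝ) + 1),
          mul_div_mul_left _ _ (by positivity : ((n : ℝ) + 1) ≠ 0)]
      linarith
  have hlim0 : Filter.Tendsto (fun n : ℕ => t 0 / ((n : ℝ) + 1)) Filter.atTop (nhds 0) := by
    have h := tendsto_one_div_add_atTop_nhds_zero_nat.const_mul (t 0)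
    simpa [mul_one_div, div_eq_mul_inv] using h
  have htlim : Filter.Tendsto t Filter.atTop (nhds 0) := squeeze_zero htpos hdec hlim0
  have hHr : HasSum r (t 0 / α) := by
    rw [hasSum_iff_tendsto_nat_of_nonneg hrpos]
    have h : Filter.Tendsto (fun N : ℕ => (t 0 - t N) / α) Filter.atTop
        (nhds ((t 0 - 0) / α)) := (tendsto_const_nhds.sub htlim).div_const α
    simp only [sub_zero] at h
    exact Filter.Tendsto.congr (fun N => (hsum N).symm) h
  have habs : ∀ n : ℕ, |fcdCoeff α ((n : ℤ) + 1)| = C * r n := fun n => by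
    rw [fcd_coeff_succ hα1 hα2 n]
    show |(-(C * r n))| = C * r n
    rw [abs_neg, abs_of_nonneg (mul_nonneg hCpos.le (hrpos n))]
  set F : ℤ → ℝ := fun k => if k = 0 then 0 else |fcdCoeff α k| with hFdef
  have hF1 : HasSum (fun n : ℕ => F ((n : ℤ) + 1)) (C * (t 0 / α)) := by
    have heq : (fun n : ℕ => F ((n : ℤ) + 1)) = fun n => C * r n := by
      funext n
      rw [hFdef]
      simp only
      rw [if_neg (by omega : ¬ ((n : ℤ) + 1 = 0))]
      exact habs n
    rw [heq]
    exact hHr.mul_left C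
  have hF2 : HasSum (fun n : ℕ => F (n : ℤ)) (C * (t 0 / α)) := by
    apply (hasSum_nat_add_iff' (f := fun n : ℕ => F (n : ℤ)) 1).mp
    have hfun : (fun n : ℕ => F (((n + 1 : ℕ)) : ℤ)) = fun n : ℕ => F ((n : ℤ) + 1) := by
      funext n; rw [Nat.cast_add_one]
    rw [hfun]
    have h0 : ∑ i ∈ Finset.range 1, F (i : ℤ) = 0 := by
      simp [hFdef]
    rw [h0, sub_zero]
    exact hF1
  have hF3 : HasSum (fun n : ℕ => F (-((n : ℤ) + 1))) (C * (t 0 / α)) := by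
    have heq : (fun n : ℕ => F (-((n : ℤ) + 1))) = fun n => C * r n := by
      funext n
      rw [hFdef]
      simp only
      rw [if_neg (by omega : ¬ (-((n : ℤ) + 1) = 0)), fcd_neg]
      exact habs n
    rw [heq]
    exact hHr.mul_left C
  have hFsum : HasSum F (C * (t 0 / α) + C * (t 0 / α)) := HasSum.of_nat_of_neg_add_one hF2 hF3
  have hval : C * (t 0 / α) + C * (t 0 / α) = fcdCoeff α 0 := by
    have ht0 : t 0 = Real.Gamma (1 - α / 2) / Real.Gamma (1 + α / 2) := by
      rw [ht]; norm_num
    rw [ht0, hC, ← fcd_key hα1 hα2]; ring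
  rw [← hval]
  have hsupp : ∀ k ∉ Set.range (Subtype.val : {k : ℤ // k ≠ 0} → ℤ), F k = 0 := by
    intro k hk
    have hk0 : k = 0 := by
      by_contra h
      exact hk ⟨⟨k, h⟩, rfl⟩
    simp [hFdef, hk0]
  have hfin := (Function.Injective.hasSum_iff Subtype.val_injective hsupp).2 hFsum
  have hfun : (fun k : {k : ℤ // k ≠ 0} => |fcdCoeff α (k : ℤ)|) = F ∘ Subtype.val := by
    funext k
    simp [hFdef, k.2]
  rw [hfun]
  exact hfin
end

section
/- Let T ∈ ℝ^{M×M} be symmetric positive definite, ω>0, and 𝒯 = [[I,T],[-T,I]]. Then the spectral norm of 𝒰_ω = (ωI+𝒯)^{-1}(ωI-𝒯) equals max over eigenvalues λ of T of sqrt(((ω-1)²+λ²)/((ω+1)²+λ²)), and this quantity is strictly less than 1. -/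
open Matrix

namespace Stmt6Aux

variable {m : ℕ}

noncomputable def Phi (V : Matrix (Fin m) (Fin m) ℝ) (d : Fin m → ℝ) :
    Matrix (Fin m) (Fin m) ℝ := V * Matrix.diagonal d * star V

variable {V : Matrix (Fin m) (Fin m) ℝ}

lemma Phi_mul (hV : V * star V = 1) (d e : Fin m → ℝ) :
    Phi V d * Phi V e = Phi V (d * e) := by
  have hV' : star V * V = 1 := mul_eq_one_comm.mp hV
  simp only [Phi, mul_assoc]
  rw [← mul_assoc (star V) V, hV', one_mul, ← mul_assoc (diagonal d), diagonal_mul_diagonal]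
  rfl

lemma Phi_add (d e : Fin m → ℝ) : Phi V d + Phi V e = Phi V (d + e) := by
  rw [Phi, Phi, Phi, show d + e = fun i => d i + e i from rfl, ← diagonal_add]; noncomm_ring

lemma Phi_sub (d e : Fin m → ℝ) : Phi V d - Phi V e = Phi V (d - e) := by
  rw [Phi, Phi, Phi, show d - e = fun i => d i - e i from rfl, ← diagonal_sub]; noncomm_ring

lemma Phi_smul (r : ℝ) (d : Fin m → ℝ) : r • Phi V d = Phi V (r • d) := by
  simp only [Phi, diagonal_smul, smul_mul_assoc, mul_smul_comm]

lemma Phi_one (hV : V * star V = 1) : Phi V 1 = 1 := by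
  simp only [Phi, Pi.one_def, diagonal_one, mul_one]; exact hV

lemma Phi_inv (hV : V * star V = 1) (d : Fin m → ℝ) (hd : ∀ i, d i ≠ 0) :
    (Phi V d)⁻¹ = Phi V (fun i => (d i)⁻¹) := by
  apply inv_eq_right_inv
  rw [Phi_mul hV]
  have h1 : d * (fun i => (d i)⁻¹) = 1 := by
    funext i; exact mul_inv_cancel₀ (hd i)
  rw [h1, Phi_one hV]

lemma Phi_posSemidef (d : Fin m → ℝ) (hd : ∀ i, 0 ≤ d i) : (Phi V d).PosSemidef := by
  have := (Matrix.posSemidef_diagonal_iff.mpr hd).mul_mul_conjTranspose_same V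
  simpa [Phi, Matrix.star_eq_conjTranspose] using this

lemma dot_nonneg_of_psd {K : Matrix (Fin m) (Fin m) ℝ} (h : K.PosSemidef)
    (z : Fin m → ℝ) : 0 ≤ z ⬝ᵥ (K *ᵥ z) := by
  simpa using h.dotProduct_mulVec_nonneg z

lemma norm_sq_eq_dot {n : Type*} [Fintype n] (x : EuclideanSpace ℝ n) :
    ‖x‖ ^ 2 = (WithLp.equiv 2 (n → ℝ) x) ⬝ᵥ (WithLp.equiv 2 (n → ℝ) x) := by
  rw [EuclideanSpace.norm_eq, Real.sq_sqrt (by positivity)]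
  simp [dotProduct, Real.norm_eq_abs, sq_abs, sq]

lemma clm_apply_norm_sq {n : Type*} [Fintype n] [DecidableEq n] (A : Matrix n n ℝ)
    (x : EuclideanSpace ℝ n) :
    ‖(toEuclideanCLM (𝕜 := ℝ) A) x‖ ^ 2 =
      (WithLp.equiv 2 (n → ℝ) x) ⬝ᵥ ((Aᴴ * A) *ᵥ (WithLp.equiv 2 (n → ℝ) x)) := by
  rw [norm_sq_eq_dot]
  simp only [WithLp.equiv_apply, ofLp_toEuclideanCLM, toLin'_apply]
  have hAH : Aᴴ = Aᵀ := by ext i j; simp [conjTranspose_apply]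
  rw [hAH]
  conv_rhs => rw [← mulVec_mulVec, dotProduct_mulVec, vecMul_transpose]

end Stmt6Aux

open Stmt6Aux

/-- The spectral (operator ℓ₂-) norm of a real square matrix. -/
noncomputable def specNorm {n : Type*} [Fintype n] [DecidableEq n]
    (A : Matrix n n ℝ) : ℝ :=
  ‖(Matrix.toEuclideanCLM (𝕜 := ℝ) A : EuclideanSpace ℝ n →L[ℝ] EuclideanSpace ℝ n)‖

theorem stmt6 (M : ℕ) (T : Matrix (Fin M) (Fin M) ℝ) (hT : T.PosDef)
    (ω : ℝ) (hω : 0 < ω) :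
    specNorm ((ω • (1 : Matrix (Fin M ⊕ Fin M) (Fin M ⊕ Fin M) ℝ) + fromBlocks 1 T (-T) 1)⁻¹
        * (ω • (1 : Matrix (Fin M ⊕ Fin M) (Fin M ⊕ Fin M) ℝ) - fromBlocks 1 T (-T) 1))
      = ⨆ μ ∈ spectrum ℝ T, Real.sqrt (((ω - 1) ^ 2 + μ ^ 2) / ((ω + 1) ^ 2 + μ ^ 2)) ∧
    (⨆ μ ∈ spectrum ℝ T, Real.sqrt (((ω - 1) ^ 2 + μ ^ 2) / ((ω + 1) ^ 2 + μ ^ 2))) < 1 := by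
  classical
  let f : ℝ → ℝ := fun μ => Real.sqrt (((ω - 1) ^ 2 + μ ^ 2) / ((ω + 1) ^ 2 + μ ^ 2))
  show specNorm _ = (⨆ μ ∈ spectrum ℝ T, f μ) ∧ (⨆ μ ∈ spectrum ℝ T, f μ) < 1
  set c : ℝ := ⨆ μ ∈ spectrum ℝ T, f μ with hc
  -- basic facts about f
  have hf0 : ∀ μ : ℝ, 0 ≤ f μ := fun μ => Real.sqrt_nonneg _
  have hqlpos' : ∀ μ : ℝ, (0:ℝ) < (ω + 1) ^ 2 + μ ^ 2 := by
    intro μ; nlinarith [sq_nonneg μ, sq_nonneg (ω+1)]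
  have hflt1 : ∀ μ : ℝ, f μ < 1 := by
    intro μ
    have h1 : ((ω - 1) ^ 2 + μ ^ 2) / ((ω + 1) ^ 2 + μ ^ 2) < 1 := by
      rw [div_lt_one (hqlpos' μ)]; nlinarith
    calc f μ < Real.sqrt 1 := Real.sqrt_lt_sqrt (by positivity) h1
    _ = 1 := Real.sqrt_one
  have hfle1 : ∀ μ : ℝ, f μ ≤ 1 := fun μ => le_of_lt (hflt1 μ)
  -- sup machinery
  have hbdd : BddAbove (Set.range fun μ => ⨆ _ : μ ∈ spectrum ℝ T, f μ) := by
    refine ⟨1, ?_⟩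
    rintro x ⟨μ, rfl⟩
    show (⨆ _ : μ ∈ spectrum ℝ T, f μ) ≤ 1
    by_cases h : μ ∈ spectrum ℝ T
    · rw [ciSup_pos h]; exact hfle1 μ
    · haveI : IsEmpty (μ ∈ spectrum ℝ T) := ⟨h⟩
      rw [Real.iSup_of_isEmpty]; norm_num
  have hle_c : ∀ μ ∈ spectrum ℝ T, f μ ≤ c := by
    intro μ hμ
    rw [hc]
    have := le_ciSup hbdd μ
    rwa [ciSup_pos hμ] at this
  have hc_ub : ∀ x : ℝ, 0 ≤ x → (∀ μ ∈ spectrum ℝ T, f μ ≤ x) → c ≤ x := by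
    intro x hx h
    rw [hc]
    refine ciSup_le fun μ => ?_
    show (⨆ _ : μ ∈ spectrum ℝ T, f μ) ≤ x
    by_cases hμ : μ ∈ spectrum ℝ T
    · rw [ciSup_pos hμ]; exact h μ hμ
    · haveI : IsEmpty (μ ∈ spectrum ℝ T) := ⟨hμ⟩
      rw [Real.iSup_of_isEmpty]; exact hx
  have hc0 : 0 ≤ c := by
    have h0 : (0:ℝ) ≤ ⨆ _ : (0:ℝ) ∈ spectrum ℝ T, f 0 := by
      by_cases h : (0:ℝ) ∈ spectrum ℝ T
      · rw [ciSup_pos h]; exact hf0 0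
      · haveI : IsEmpty ((0:ℝ) ∈ spectrum ℝ T) := ⟨h⟩
        rw [Real.iSup_of_isEmpty]
    exact h0.trans (le_ciSup hbdd 0)
  have hclt1 : c < 1 := by
    rcases (spectrum ℝ T).eq_empty_or_nonempty with h | h
    · have : c ≤ 0 := hc_ub 0 le_rfl (by intro μ hμ; rw [h] at hμ; exact absurd hμ (Set.notMem_empty μ))
      linarith
    · obtain ⟨μ₀, hμ₀, hmax⟩ := Set.exists_max_image (spectrum ℝ T) f
        (Matrix.finite_real_spectrum (𝕜 := ℝ)) h
      exact lt_of_le_of_lt (hc_ub (f μ₀) (hf0 μ₀) hmax) (hflt1 μ₀)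
  refine ⟨?_, hclt1⟩
  -- spectral setup
  have hH : T.IsHermitian := hT.1
  set ev : Fin M → ℝ := hH.eigenvalues with hev
  set V : Matrix (Fin M) (Fin M) ℝ := (hH.eigenvectorUnitary : Matrix (Fin M) (Fin M) ℝ) with hVdef
  have hV : V * star V = 1 := (Matrix.mem_unitaryGroup_iff).mp hH.eigenvectorUnitary.2
  have hTt : Tᵀ = T := by
    ext i j
    have h2 := congrFun (congrFun hH.eq i) j
    simpa [conjTranspose_apply] using h2
  have hTPhi : T = Phi V ev := by
    have h := hH.spectral_theorem
    rw [Phi]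
    rw [show diagonal ev = diagonal (RCLike.ofReal ∘ hH.eigenvalues) by
      rw [hev, RCLike.ofReal_real_eq_id]; rfl]
    exact h
  set pl : Fin M → ℝ := fun i => (ω - 1) ^ 2 + ev i ^ 2 with hpl
  set ql : Fin M → ℝ := fun i => (ω + 1) ^ 2 + ev i ^ 2 with hql
  set gl : Fin M → ℝ := fun i => pl i * (ql i)⁻¹ with hgl
  have hqlpos : ∀ i, 0 < ql i := fun i => hqlpos' (ev i)
  have hqlne : ∀ i, ql i ≠ 0 := fun i => ne_of_gt (hqlpos i)
  set p : Matrix (Fin M) (Fin M) ℝ := (ω - 1)^2 • 1 + T * T with hpdef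
  set q : Matrix (Fin M) (Fin M) ℝ := (ω + 1)^2 • 1 + T * T with hqdef
  have hpPhi : p = Phi V pl := by
    have harg : (ω - 1)^2 • (1 : Fin M → ℝ) + ev * ev = pl := by
      funext i
      simp only [Pi.add_apply, Pi.smul_apply, Pi.one_apply, Pi.mul_apply, smul_eq_mul, hpl]
      ring
    rw [hpdef, hTPhi, Phi_mul hV, ← Phi_one hV, Phi_smul, Phi_add, harg]
  have hqPhi : q = Phi V ql := by
    have harg : (ω + 1)^2 • (1 : Fin M → ℝ) + ev * ev = ql := by
      funext i
      simp only [Pi.add_apply, Pi.smul_apply, Pi.one_apply, Pi.mul_apply, smul_eq_mul, hql]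
      ring
    rw [hqdef, hTPhi, Phi_mul hV, ← Phi_one hV, Phi_smul, Phi_add, harg]
  have hqinvPhi : q⁻¹ = Phi V (fun i => (ql i)⁻¹) := by
    rw [hqPhi]; exact Phi_inv hV _ hqlne
  have hqq : q * q⁻¹ = 1 := by
    rw [hqinvPhi, hqPhi, Phi_mul hV,
      show (ql * fun i => (ql i)⁻¹) = 1 from funext fun i => mul_inv_cancel₀ (hqlne i),
      Phi_one hV]
  have hq'q : q⁻¹ * q = 1 := mul_eq_one_comm.mp hqq
  have hcommTq : q⁻¹ * T = T * q⁻¹ := by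
    rw [hqinvPhi, hTPhi, Phi_mul hV, Phi_mul hV, mul_comm]
  have hGPhi : p * q⁻¹ = Phi V gl := by
    rw [hpPhi, hqinvPhi, Phi_mul hV]
    rfl
  -- block matrices
  set Ab := ω • (1 : Matrix (Fin M ⊕ Fin M) (Fin M ⊕ Fin M) ℝ) + fromBlocks 1 T (-T) 1 with hAb
  set Bb := ω • (1 : Matrix (Fin M ⊕ Fin M) (Fin M ⊕ Fin M) ℝ) - fromBlocks 1 T (-T) 1 with hBb
  have hone : (1 : Matrix (Fin M ⊕ Fin M) (Fin M ⊕ Fin M) ℝ) = fromBlocks 1 0 0 1 :=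
    fromBlocks_one.symm
  have hAblock : Ab = fromBlocks ((ω+1) • 1) T (-T) ((ω+1) • 1) := by
    rw [hAb, hone, fromBlocks_smul, fromBlocks_add, fromBlocks_inj]
    refine ⟨?_, ?_, ?_, ?_⟩ <;> simp [add_smul]
  have hBblock : Bb = fromBlocks ((ω-1) • 1) (-T) T ((ω-1) • 1) := by
    rw [hBb, hone, fromBlocks_smul, sub_eq_add_neg, fromBlocks_neg, fromBlocks_add,
      fromBlocks_inj]
    refine ⟨?_, ?_, ?_, ?_⟩ <;> simp [sub_eq_add_neg, add_smul, neg_smul]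
  have hAH : Abᴴ = fromBlocks ((ω+1) • 1) (-T) T ((ω+1) • 1) := by
    rw [hAblock, fromBlocks_conjTranspose]
    simp [conjTranspose_smul, hH.eq, hTt]
  have hBH : Bbᴴ = fromBlocks ((ω-1) • 1) T (-T) ((ω-1) • 1) := by
    rw [hBblock, fromBlocks_conjTranspose]
    simp [conjTranspose_smul, hH.eq, hTt]
  have hAAH : Ab * Abᴴ = fromBlocks q 0 0 q := by
    rw [hAH, hAblock, fromBlocks_multiply, hqdef, fromBlocks_inj]
    refine ⟨?_, ?_, ?_, ?_⟩ <;>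
      simp [smul_mul_assoc, mul_smul_comm, smul_smul, pow_two] <;> abel
  have hQinv : (fromBlocks q 0 0 q)⁻¹ =
      fromBlocks q⁻¹ 0 0 q⁻¹ := by
    apply inv_eq_right_inv
    rw [fromBlocks_multiply]
    simp [hqq, fromBlocks_one]
  have hpq : p * q⁻¹ = (ω-1)^2 • q⁻¹ + T * (T * q⁻¹) := by
    rw [hpdef, add_mul, smul_mul_assoc, one_mul, mul_assoc]
  have hUHU : (Ab⁻¹ * Bb)ᴴ * (Ab⁻¹ * Bb) = fromBlocks (p * q⁻¹) 0 0 (p * q⁻¹) := by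
    have h1 : (Ab⁻¹ * Bb)ᴴ * (Ab⁻¹ * Bb) = Bbᴴ * ((Ab * Abᴴ)⁻¹ * Bb) := by
      rw [conjTranspose_mul, Matrix.mul_inv_rev, conjTranspose_nonsing_inv]
      noncomm_ring
    rw [h1, hAAH, hQinv, hBH, hBblock, fromBlocks_multiply, fromBlocks_multiply, hpq,
      fromBlocks_inj]
    refine ⟨?_, ?_, ?_, ?_⟩ <;>
      simp [smul_mul_assoc, mul_smul_comm, smul_smul, pow_two, hcommTq, mul_assoc] <;> abel
  -- pointwise facts
  have hf_eq : ∀ μ : ℝ, f μ = Real.sqrt (((ω - 1) ^ 2 + μ ^ 2) / ((ω + 1) ^ 2 + μ ^ 2)) :=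
    fun _ => rfl
  have hglnn : ∀ i, 0 ≤ gl i := by
    intro i
    have h1 : 0 ≤ pl i := by simp only [hpl]; positivity
    have h2 : 0 ≤ (ql i)⁻¹ := le_of_lt (inv_pos.mpr (hqlpos i))
    simp only [hgl]
    exact mul_nonneg h1 h2
  have hfev : ∀ i, f (ev i) = Real.sqrt (gl i) := by
    intro i
    rw [hf_eq, div_eq_mul_inv]
  have hmem : ∀ i, ev i ∈ spectrum ℝ T := fun i => hH.eigenvalues_mem_spectrum_real i
  have hKpsd : ((c^2) • (1 : Matrix (Fin M) (Fin M) ℝ) - p * q⁻¹).PosSemidef := by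
    rw [hGPhi, ← Phi_one hV, Phi_smul, Phi_sub]
    apply Phi_posSemidef
    intro i
    simp only [Pi.sub_apply, Pi.smul_apply, Pi.one_apply, smul_eq_mul, mul_one]
    have h1 : Real.sqrt (gl i) ≤ c := by
      rw [← hfev i]; exact hle_c (ev i) (hmem i)
    nlinarith [Real.sq_sqrt (hglnn i), Real.sqrt_nonneg (gl i)]
  have hGquad : ∀ z : Fin M → ℝ, z ⬝ᵥ ((p * q⁻¹) *ᵥ z) ≤ c^2 * (z ⬝ᵥ z) := by
    intro z
    have h0 := dot_nonneg_of_psd hKpsd z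
    rw [sub_mulVec, dotProduct_sub, smul_mulVec, one_mulVec, dotProduct_smul,
      smul_eq_mul] at h0
    linarith
  -- upper bound
  have hub : specNorm (Ab⁻¹ * Bb) ≤ c := by
    unfold specNorm
    refine ContinuousLinearMap.opNorm_le_bound _ hc0 fun x => ?_
    have h1 : ‖(toEuclideanCLM (𝕜 := ℝ) (Ab⁻¹ * Bb)) x‖^2
        = (WithLp.equiv 2 _ x) ⬝ᵥ ((fromBlocks (p * q⁻¹) 0 0 (p * q⁻¹)) *ᵥ (WithLp.equiv 2 _ x)) := by
      rw [clm_apply_norm_sq, hUHU]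
    set y : (Fin M ⊕ Fin M) → ℝ := WithLp.equiv 2 _ x with hy
    have h2 : y ⬝ᵥ ((fromBlocks (p * q⁻¹) 0 0 (p * q⁻¹)) *ᵥ y) ≤ c^2 * (y ⬝ᵥ y) := by
      rw [fromBlocks_mulVec, zero_mulVec, zero_mulVec, add_zero, zero_add,
        dotProduct_block, Sum.elim_comp_inl, Sum.elim_comp_inr, dotProduct_block y y]
      calc (y ∘ Sum.inl) ⬝ᵥ ((p * q⁻¹) *ᵥ (y ∘ Sum.inl))
            + (y ∘ Sum.inr) ⬝ᵥ ((p * q⁻¹) *ᵥ (y ∘ Sum.inr))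
          ≤ c^2 * ((y ∘ Sum.inl) ⬝ᵥ (y ∘ Sum.inl)) + c^2 * ((y ∘ Sum.inr) ⬝ᵥ (y ∘ Sum.inr)) :=
            add_le_add (hGquad _) (hGquad _)
        _ = c^2 * ((y ∘ Sum.inl) ⬝ᵥ (y ∘ Sum.inl) + (y ∘ Sum.inr) ⬝ᵥ (y ∘ Sum.inr)) := by ring
    have h3 : ‖x‖^2 = y ⬝ᵥ y := norm_sq_eq_dot x
    have h4 : ‖(toEuclideanCLM (𝕜 := ℝ) (Ab⁻¹ * Bb)) x‖^2 ≤ (c * ‖x‖)^2 := by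
      rw [h1, mul_pow]
      calc y ⬝ᵥ ((fromBlocks (p * q⁻¹) 0 0 (p * q⁻¹)) *ᵥ y) ≤ c^2 * (y ⬝ᵥ y) := h2
        _ = c^2 * ‖x‖^2 := by rw [h3]
    nlinarith [norm_nonneg ((toEuclideanCLM (𝕜 := ℝ) (Ab⁻¹ * Bb)) x),
      mul_nonneg hc0 (norm_nonneg x)]
  -- lower bound
  have hlb : c ≤ specNorm (Ab⁻¹ * Bb) := by
    refine hc_ub _ (norm_nonneg _) ?_
    intro μ hμ
    rw [hH.spectrum_real_eq_range_eigenvalues] at hμ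
    obtain ⟨i, rfl⟩ := hμ
    show f (ev i) ≤ _
    set v : Fin M → ℝ := ⇑(hH.eigenvectorBasis i) with hv
    have hTv : T *ᵥ v = ev i • v := hH.mulVec_eigenvectorBasis i
    have hpv : p *ᵥ v = pl i • v := by
      rw [hpdef, add_mulVec, smul_mulVec, one_mulVec, ← mulVec_mulVec, hTv, mulVec_smul,
        hTv, smul_smul, ← add_smul]
      congr 1
      simp only [hpl]; ring
    have hqv : q *ᵥ v = ql i • v := by
      rw [hqdef, add_mulVec, smul_mulVec, one_mulVec, ← mulVec_mulVec, hTv, mulVec_smul,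
        hTv, smul_smul, ← add_smul]
      congr 1
      simp only [hql]; ring
    have hqiv : q⁻¹ *ᵥ v = (ql i)⁻¹ • v := by
      have h2 : q⁻¹ *ᵥ (q *ᵥ v) = v := by rw [mulVec_mulVec, hq'q, one_mulVec]
      rw [hqv, mulVec_smul] at h2
      calc q⁻¹ *ᵥ v = (ql i)⁻¹ • (ql i • (q⁻¹ *ᵥ v)) := by
            rw [smul_smul, inv_mul_cancel₀ (hqlne i), one_smul]
        _ = (ql i)⁻¹ • v := by rw [h2]
    have hGv : (p * q⁻¹) *ᵥ v = gl i • v := by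
      rw [← mulVec_mulVec, hqiv, mulVec_smul, hpv, smul_smul, mul_comm ((ql i)⁻¹) (pl i)]
    have hvv : v ⬝ᵥ v = 1 := by
      have hb : ‖hH.eigenvectorBasis i‖ = 1 := hH.eigenvectorBasis.orthonormal.1 i
      have h2 := norm_sq_eq_dot (hH.eigenvectorBasis i)
      rw [hb] at h2
      simpa using h2.symm
    set x : EuclideanSpace ℝ (Fin M ⊕ Fin M) := (WithLp.equiv 2 _).symm (Sum.elim v 0) with hx
    have hyx : WithLp.equiv 2 ((Fin M ⊕ Fin M) → ℝ) x = Sum.elim v 0 := by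
      rw [hx]; exact Equiv.apply_symm_apply _ _
    have hxn2 : ‖x‖^2 = 1 := by
      rw [norm_sq_eq_dot x, hyx, dotProduct_block, Sum.elim_comp_inl, Sum.elim_comp_inr, hvv]
      simp
    have hxn : ‖x‖ = 1 := by
      rw [show ‖x‖ = Real.sqrt (‖x‖^2) from (Real.sqrt_sq (norm_nonneg x)).symm, hxn2,
        Real.sqrt_one]
    have hnormUx : ‖(toEuclideanCLM (𝕜 := ℝ) (Ab⁻¹ * Bb)) x‖^2 = gl i := by
      rw [clm_apply_norm_sq, hUHU, hyx, fromBlocks_mulVec, zero_mulVec, zero_mulVec, add_zero,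
        zero_add, dotProduct_block, Sum.elim_comp_inl, Sum.elim_comp_inr, hGv]
      simp [dotProduct_smul, hvv, mulVec_zero]
    have h5 : f (ev i) = ‖(toEuclideanCLM (𝕜 := ℝ) (Ab⁻¹ * Bb)) x‖ := by
      rw [hfev i, ← hnormUx, Real.sqrt_sq (norm_nonneg _)]
    calc f (ev i) = ‖(toEuclideanCLM (𝕜 := ℝ) (Ab⁻¹ * Bb)) x‖ := h5
      _ ≤ ‖(toEuclideanCLM (𝕜 := ℝ) (Ab⁻¹ * Bb) : EuclideanSpace ℝ (Fin M ⊕ Fin M) →L[ℝ] EuclideanSpace ℝ (Fin M ⊕ Fin M))‖ * ‖x‖ :=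
          ContinuousLinearMap.le_opNorm _ _
      _ = specNorm (Ab⁻¹ * Bb) := by rw [hxn, mul_one]; rfl
  exact le_antisymm hub hlb
end

section
/- For λ_max > 0, the function ω ↦ sqrt(((ω-1)²+λ_max²)/((ω+1)²+λ_max²)) on (0,∞) attains its minimum at ω* = sqrt(λ_max²+1), with minimum value λ_max/(1+sqrt(λ_max²+1)). -/
theorem stmt10 (lmax : ℝ) (hl : 0 < lmax) :
    (∀ ω : ℝ, 0 < ω →
      Real.sqrt (((Real.sqrt (lmax ^ 2 + 1) - 1) ^ 2 + lmax ^ 2)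
          / ((Real.sqrt (lmax ^ 2 + 1) + 1) ^ 2 + lmax ^ 2))
        ≤ Real.sqrt (((ω - 1) ^ 2 + lmax ^ 2) / ((ω + 1) ^ 2 + lmax ^ 2))) ∧
    Real.sqrt (((Real.sqrt (lmax ^ 2 + 1) - 1) ^ 2 + lmax ^ 2)
        / ((Real.sqrt (lmax ^ 2 + 1) + 1) ^ 2 + lmax ^ 2))
      = lmax / (1 + Real.sqrt (lmax ^ 2 + 1)) := by
  set s := Real.sqrt (lmax ^ 2 + 1) with hs_def
  have hpos : (0:ℝ) < lmax ^ 2 + 1 := by positivity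
  have hs2 : s ^ 2 = lmax ^ 2 + 1 := Real.sq_sqrt hpos.le
  have hs1 : 1 < s := by
    nlinarith [Real.sqrt_nonneg (lmax ^ 2 + 1), hs2]
  have hratio : ((s - 1) ^ 2 + lmax ^ 2) / ((s + 1) ^ 2 + lmax ^ 2)
      = lmax ^ 2 / (1 + s) ^ 2 := by
    rw [div_eq_div_iff (by positivity) (by positivity)]
    nlinarith [hs2]
  constructor
  · intro ω hω
    apply Real.sqrt_le_sqrt
    rw [div_le_div_iff₀ (by positivity) (by positivity)]
    nlinarith [sq_nonneg (ω - s), hs2]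
  · rw [hratio, Real.sqrt_div (by positivity), Real.sqrt_sq hl.le,
      Real.sqrt_sq (by linarith)]
end

section
/- If η is any eigenvalue of the NASS-preconditioned matrix ℱ_ω^{-1}ℛ, where ℱ_ω = (1/(2ω))(ωI+𝒯)(ωI+𝒟) and ℛ = 𝒯 + 𝒟 with 𝒯 = [[I,T],[-T,I]] (T symmetric positive definite) and 𝒟 = [[0,-D],[D,0]] (D diagonal), then |1 - η| ≤ σ(ω) = max_{λ∈spec(T)} sqrt(((ω-1)²+λ²)/((ω+1)²+λ²)) < 1; i.e., all eigenvalues of ℱ_ω^{-1}ℛ lie in the open disk of radius 1 centered at 1. -/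
open Matrix

section helpers
set_option linter.unusedSectionVars false
variable {n : Type*} [Fintype n] [DecidableEq n]

def nsq (v : n → ℂ) : ℝ := ∑ i, Complex.normSq (v i)

lemma nsq_nonneg (v : n → ℂ) : 0 ≤ nsq v :=
  Finset.sum_nonneg fun _ _ => Complex.normSq_nonneg _

lemma nsq_pos {v : n → ℂ} (hv : v ≠ 0) : 0 < nsq v := by
  apply Finset.sum_pos' (fun i _ => Complex.normSq_nonneg _)
  obtain ⟨i, hi⟩ := Function.ne_iff.mp hv
  exact ⟨i, Finset.mem_univ i, Complex.normSq_pos.mpr hi⟩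

lemma dot_star_self (v : n → ℂ) : star v ⬝ᵥ v = (nsq v : ℂ) := by
  simp only [dotProduct, nsq, Pi.star_apply, Complex.ofReal_sum]
  exact Finset.sum_congr rfl fun i _ => (Complex.normSq_eq_conj_mul_self (z := v i)).symm

lemma nsq_smul (c : ℂ) (v : n → ℂ) : nsq (c • v) = Complex.normSq c * nsq v := by
  simp [nsq, Complex.normSq_mul, Finset.mul_sum]

lemma nsq_neg (v : n → ℂ) : nsq (-v) = nsq v := by simp [nsq]

lemma key_nsq (S : Matrix n n ℂ) (hS : Sᴴ = -S) (c : ℝ) (v : n → ℂ) :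
    nsq ((c • 1 + S) *ᵥ v) = c ^ 2 * nsq v + nsq (S *ᵥ v) := by
  have hcross : star v ⬝ᵥ (S *ᵥ v) + star (S *ᵥ v) ⬝ᵥ v = 0 := by
    have h1 : star (S *ᵥ v) ⬝ᵥ v = star v ⬝ᵥ (Sᴴ *ᵥ v) := by
      rw [star_mulVec, dotProduct_mulVec]
    rw [h1, hS, neg_mulVec]
    simp
  have hv : (c • 1 + S) *ᵥ v = (c : ℂ) • v + S *ᵥ v := by
    rw [add_mulVec, smul_mulVec, one_mulVec]
    congr 1
  have hC : ((nsq ((c • 1 + S) *ᵥ v) : ℝ) : ℂ)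
      = ((c ^ 2 * nsq v + nsq (S *ᵥ v) : ℝ) : ℂ) := by
    rw [← dot_star_self, hv]
    push_cast
    rw [← dot_star_self, ← dot_star_self]
    have hstar : star ((c:ℂ) • v + S *ᵥ v) = (c:ℂ) • star v + star (S *ᵥ v) := by
      rw [star_add, star_smul]
      simp [Complex.conj_ofReal]
    rw [hstar]
    simp only [add_dotProduct, dotProduct_add, smul_dotProduct, dotProduct_smul, smul_eq_mul]
    linear_combination (c : ℂ) * hcross
  exact_mod_cast hC

lemma key_det {S : Matrix n n ℂ} (hS : Sᴴ = -S) {c : ℝ} (hc : c ≠ 0) :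
    det (c • 1 + S) ≠ 0 := by
  intro hdet
  obtain ⟨v, hv, hvz⟩ := (Matrix.exists_mulVec_eq_zero_iff).mpr hdet
  have h := key_nsq S hS c v
  rw [hvz] at h
  have h0 : nsq (0 : n → ℂ) = 0 := by simp [nsq]
  rw [h0] at h
  have := nsq_pos hv
  nlinarith [nsq_nonneg (S *ᵥ v), sq_abs c, pow_pos (abs_pos.mpr hc) 2]

lemma nsq_mulVec_unitary {U : Matrix n n ℂ} (hU : Uᴴ * U = 1) (v : n → ℂ) :
    nsq (U *ᵥ v) = nsq v := by
  have hC : ((nsq (U *ᵥ v) : ℝ) : ℂ) = ((nsq v : ℝ) : ℂ) := by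
    rw [← dot_star_self, ← dot_star_self, star_mulVec, ← Matrix.dotProduct_mulVec,
      mulVec_mulVec, hU, one_mulVec]
  exact_mod_cast hC

lemma nsq_mulVec_diagonal_le (d : n → ℝ) (lm : ℝ) (h : ∀ i, |d i| ≤ lm) (v : n → ℂ) :
    nsq ((diagonal fun i => (d i : ℂ)) *ᵥ v) ≤ lm ^ 2 * nsq v := by
  simp only [nsq, Finset.mul_sum]
  apply Finset.sum_le_sum
  intro i _
  rw [mulVec_diagonal, Complex.normSq_mul]
  have h1 : Complex.normSq ((d i : ℂ)) = (d i) ^ 2 := by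
    simp [Complex.normSq_ofReal, sq]
  rw [h1]
  have h2 : (d i) ^ 2 ≤ lm ^ 2 := by
    have := h i
    nlinarith [abs_nonneg (d i), sq_abs (d i)]
  nlinarith [Complex.normSq_nonneg (v i)]

lemma map_smul_RC (r : ℝ) (X : Matrix n n ℝ) :
    (r • X).map (algebraMap ℝ ℂ) = r • (X.map (algebraMap ℝ ℂ)) := by
  ext i j
  simp [Matrix.map_apply, Complex.real_smul]

lemma map_star_RC (X : Matrix n n ℝ) :
    (star X).map (algebraMap ℝ ℂ) = star (X.map (algebraMap ℝ ℂ)) := by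
  have hf : ∀ a : ℝ, (algebraMap ℝ ℂ) (star a) = star ((algebraMap ℝ ℂ) a) := by
    intro a
    simp [Complex.conj_ofReal]
  change (Xᴴ).map _ = (X.map _)ᴴ
  rw [Matrix.conjTranspose_map _ hf]

lemma Tbound [Nonempty n] {T : Matrix n n ℝ} (hT : T.PosDef) :
    ∃ lm : ℝ, lm ∈ spectrum ℝ T ∧ (∀ μ ∈ spectrum ℝ T, 0 < μ ∧ μ ≤ lm) ∧
      ∀ x : n → ℂ, nsq (T.map (algebraMap ℝ ℂ) *ᵥ x) ≤ lm ^ 2 * nsq x := by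
  have hH : T.IsHermitian := hT.1
  obtain ⟨i₀, -, hmax⟩ := Finset.exists_max_image Finset.univ hH.eigenvalues Finset.univ_nonempty
  set lm := hH.eigenvalues i₀ with hlm
  set U : Matrix n n ℝ := (hH.eigenvectorUnitary : Matrix n n ℝ) with hUdef
  have hU1 : U * star U = 1 := mem_unitaryGroup_iff.mp hH.eigenvectorUnitary.2
  have hU2 : star U * U = 1 := mem_unitaryGroup_iff'.mp hH.eigenvectorUnitary.2
  have hspec : T = U * diagonal hH.eigenvalues * star U := by
    have := hH.spectral_theorem
    rwa [RCLike.ofReal_real_eq_id, Function.id_comp] at this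
  have hrange : spectrum ℝ T = Set.range hH.eigenvalues := by
    let u : (Matrix n n ℝ)ˣ := ⟨U, star U, hU1, hU2⟩
    have h2 : T = (u : Matrix n n ℝ) * diagonal hH.eigenvalues
        * ((u⁻¹ : (Matrix n n ℝ)ˣ) : Matrix n n ℝ) := hspec
    conv_lhs => rw [h2]
    rw [spectrum.units_conjugate, spectrum_diagonal]
  refine ⟨lm, hH.eigenvalues_mem_spectrum_real i₀, ?_, ?_⟩
  · intro μ hμ
    rw [hrange] at hμ
    obtain ⟨i, rfl⟩ := hμ
    exact ⟨hT.eigenvalues_pos i, hmax i (Finset.mem_univ i)⟩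
  · intro x
    have habs : ∀ i, |hH.eigenvalues i| ≤ lm := fun i => by
      rw [abs_of_pos (hT.eigenvalues_pos i)]
      exact hmax i (Finset.mem_univ i)
    set f := algebraMap ℝ ℂ with hfdef
    have hV1 : (U.map f)ᴴ * U.map f = 1 := by
      have : (U.map f)ᴴ = (star U).map f := (map_star_RC U).symm
      rw [this, ← Matrix.map_mul, hU2, Matrix.map_one _ (map_zero f) (map_one f)]
    have hW1 : ((star U).map f)ᴴ * (star U).map f = 1 := by
      have : ((star U).map f)ᴴ = U.map f := by
        rw [map_star_RC]
        exact star_star _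
      rw [this, ← Matrix.map_mul, hU1, Matrix.map_one _ (map_zero f) (map_one f)]
    have hTmap : T.map f = (U.map f) * (diagonal fun i => ((hH.eigenvalues i : ℝ) : ℂ))
        * ((star U).map f) := by
      conv_lhs => rw [hspec]
      rw [Matrix.map_mul, Matrix.map_mul, Matrix.diagonal_map (map_zero f)]
      rfl
    calc nsq (T.map f *ᵥ x)
        = nsq ((U.map f) *ᵥ ((diagonal fun i => ((hH.eigenvalues i : ℝ) : ℂ))
            *ᵥ ((star U).map f *ᵥ x))) := by
          rw [hTmap, ← mulVec_mulVec, ← mulVec_mulVec]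
      _ = nsq ((diagonal fun i => ((hH.eigenvalues i : ℝ) : ℂ)) *ᵥ ((star U).map f *ᵥ x)) :=
          nsq_mulVec_unitary hV1 _
      _ ≤ lm ^ 2 * nsq ((star U).map f *ᵥ x) := nsq_mulVec_diagonal_le _ lm habs _
      _ = lm ^ 2 * nsq x := by rw [nsq_mulVec_unitary hW1]

end helpers

lemma numeric_bound (ω lm a b s N : ℝ) (hω : 0 < ω) (ha : 0 ≤ a) (hb0 : 0 ≤ b)
    (hb : b ≤ lm ^ 2 * a) (hN : 0 < N)
    (h1 : s * N = (ω - 1) ^ 2 * a + b) (h2 : N = (ω + 1) ^ 2 * a + b) :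
    s * ((ω + 1) ^ 2 + lm ^ 2) ≤ (ω - 1) ^ 2 + lm ^ 2 := by
  have hkey2 : ((ω - 1) ^ 2 * a + b) * ((ω + 1) ^ 2 + lm ^ 2)
      ≤ ((ω - 1) ^ 2 + lm ^ 2) * ((ω + 1) ^ 2 * a + b) := by
    nlinarith [mul_nonneg hω.le (sub_nonneg.mpr hb)]
  have h3 : s * ((ω + 1) ^ 2 + lm ^ 2) * N ≤ ((ω - 1) ^ 2 + lm ^ 2) * N := by
    calc s * ((ω + 1) ^ 2 + lm ^ 2) * N = (s * N) * ((ω + 1) ^ 2 + lm ^ 2) := by ring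
      _ = ((ω - 1) ^ 2 * a + b) * ((ω + 1) ^ 2 + lm ^ 2) := by rw [h1]
      _ ≤ ((ω - 1) ^ 2 + lm ^ 2) * ((ω + 1) ^ 2 * a + b) := hkey2
      _ = ((ω - 1) ^ 2 + lm ^ 2) * N := by rw [h2]
  exact le_of_mul_le_mul_right h3 hN
theorem stmt12 (M : ℕ) (T D : Matrix (Fin M) (Fin M) ℝ) (hT : T.PosDef) (hD : D.IsDiag)
    (ω : ℝ) (hω : 0 < ω)
    (𝒯 𝒟 ℛ ℱ : Matrix (Fin M ⊕ Fin M) (Fin M ⊕ Fin M) ℝ)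
    (h𝒯 : 𝒯 = fromBlocks 1 T (-T) 1) (h𝒟 : 𝒟 = fromBlocks 0 (-D) D 0)
    (hℛ : ℛ = 𝒯 + 𝒟)
    (hℱ : ℱ = (1 / (2 * ω)) • ((ω • 1 + 𝒯) * (ω • 1 + 𝒟))) :
    (∀ η ∈ spectrum ℂ ((ℱ⁻¹ * ℛ).map (algebraMap ℝ ℂ)),
      ‖1 - η‖
        ≤ ⨆ μ ∈ spectrum ℝ T, Real.sqrt (((ω - 1) ^ 2 + μ ^ 2) / ((ω + 1) ^ 2 + μ ^ 2))) ∧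
    (⨆ μ ∈ spectrum ℝ T, Real.sqrt (((ω - 1) ^ 2 + μ ^ 2) / ((ω + 1) ^ 2 + μ ^ 2))) < 1 := by
  classical
  by_cases hM : M = 0
  · subst hM
    constructor
    · intro η hη
      exfalso
      rw [spectrum.mem_iff] at hη
      exact hη ((Matrix.isUnit_iff_isUnit_det _).mpr
        (by rw [Matrix.det_isEmpty]; exact isUnit_one))
    · have hspec : ∀ μ : ℝ, μ ∉ spectrum ℝ T := by
        intro μ hμ
        rw [spectrum.mem_iff] at hμ
        exact hμ ((Matrix.isUnit_iff_isUnit_det _).mpr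
          (by rw [Matrix.det_isEmpty]; exact isUnit_one))
      have hin : ∀ μ : ℝ, (⨆ _ : μ ∈ spectrum ℝ T,
          Real.sqrt (((ω - 1) ^ 2 + μ ^ 2) / ((ω + 1) ^ 2 + μ ^ 2))) = 0 := by
        intro μ
        haveI : IsEmpty (μ ∈ spectrum ℝ T) := ⟨hspec μ⟩
        exact Real.iSup_of_isEmpty _
      calc (⨆ μ ∈ spectrum ℝ T, Real.sqrt (((ω - 1) ^ 2 + μ ^ 2) / ((ω + 1) ^ 2 + μ ^ 2)))
          = ⨆ _ : ℝ, (0:ℝ) := by exact iSup_congr hin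
        _ = 0 := ciSup_const
        _ < 1 := one_pos
  · haveI : NeZero M := ⟨hM⟩
    haveI : Nonempty (Fin M) := ⟨⟨0, Nat.pos_of_ne_zero hM⟩⟩
    obtain ⟨lm, hlmmem, hlmbd, hlmvec⟩ := Tbound hT
    have hlmpos : 0 < lm := (hlmbd lm hlmmem).1
    set σ : ℝ := Real.sqrt (((ω - 1) ^ 2 + lm ^ 2) / ((ω + 1) ^ 2 + lm ^ 2)) with hσdef
    have hdenpos : (0:ℝ) < (ω + 1) ^ 2 + lm ^ 2 := by positivity
    have hσ0 : 0 ≤ σ := Real.sqrt_nonneg _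
    have hσlt : σ < 1 := by
      have hr : ((ω - 1) ^ 2 + lm ^ 2) / ((ω + 1) ^ 2 + lm ^ 2) < 1 := by
        rw [div_lt_one hdenpos]
        nlinarith
      have h2 : σ ^ 2 < 1 := by
        rw [hσdef, Real.sq_sqrt (by positivity)]
        exact hr
      nlinarith [hσ0]
    have hmono : ∀ μ ∈ spectrum ℝ T,
        Real.sqrt (((ω - 1) ^ 2 + μ ^ 2) / ((ω + 1) ^ 2 + μ ^ 2)) ≤ σ := by
      intro μ hμ
      obtain ⟨hμ0, hμlm⟩ := hlmbd μ hμ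
      apply Real.sqrt_le_sqrt
      rw [div_le_div_iff₀ (by positivity) hdenpos]
      have hμ2 : μ ^ 2 ≤ lm ^ 2 := by nlinarith
      nlinarith [mul_nonneg hω.le (sub_nonneg.mpr hμ2)]
    have hinner : ∀ μ : ℝ, (⨆ _ : μ ∈ spectrum ℝ T,
        Real.sqrt (((ω - 1) ^ 2 + μ ^ 2) / ((ω + 1) ^ 2 + μ ^ 2))) ≤ σ := by
      intro μ
      by_cases h : μ ∈ spectrum ℝ T
      · haveI : Nonempty (μ ∈ spectrum ℝ T) := ⟨h⟩
        rw [ciSup_const]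
        exact hmono μ h
      · haveI : IsEmpty (μ ∈ spectrum ℝ T) := ⟨h⟩
        rw [Real.iSup_of_isEmpty]
        exact hσ0
    have hSupLe : (⨆ μ ∈ spectrum ℝ T,
        Real.sqrt (((ω - 1) ^ 2 + μ ^ 2) / ((ω + 1) ^ 2 + μ ^ 2))) ≤ σ := ciSup_le hinner
    have hBdd : BddAbove (Set.range fun μ : ℝ => ⨆ _ : μ ∈ spectrum ℝ T,
        Real.sqrt (((ω - 1) ^ 2 + μ ^ 2) / ((ω + 1) ^ 2 + μ ^ 2))) := by
      refine ⟨σ, ?_⟩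
      rintro y ⟨μ, rfl⟩
      exact hinner μ
    have hσle : σ ≤ ⨆ μ ∈ spectrum ℝ T,
        Real.sqrt (((ω - 1) ^ 2 + μ ^ 2) / ((ω + 1) ^ 2 + μ ^ 2)) := by
      have h := le_ciSup hBdd lm
      haveI : Nonempty (lm ∈ spectrum ℝ T) := ⟨hlmmem⟩
      rwa [ciSup_const] at h
    refine ⟨?_, lt_of_le_of_lt hSupLe hσlt⟩
    intro η hη
    refine le_trans ?_ hσle
    -- core argument
    set f := algebraMap ℝ ℂ with hfdef
    set K : Matrix (Fin M ⊕ Fin M) (Fin M ⊕ Fin M) ℝ := fromBlocks 0 T (-T) 0 with hKdef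
    have hTt : Tᵀ = T := by
      ext i j
      simpa [Matrix.conjTranspose_apply] using congrFun (congrFun hT.1 i) j
    have hDt : Dᵀ = D := by
      ext i j
      by_cases h : i = j
      · subst h; rfl
      · rw [Matrix.transpose_apply, hD (Ne.symm h), hD h]
    have hKskew : Kᵀ = -K := by
      rw [hKdef, fromBlocks_transpose, fromBlocks_neg]
      simp [hTt]
    have hDskew : 𝒟ᵀ = -𝒟 := by
      rw [h𝒟, fromBlocks_transpose, fromBlocks_neg]
      simp [hDt]
    set K' : Matrix (Fin M ⊕ Fin M) (Fin M ⊕ Fin M) ℂ := K.map f with hK'def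
    set D' : Matrix (Fin M ⊕ Fin M) (Fin M ⊕ Fin M) ℂ := 𝒟.map f with hD'def
    have hstK : ∀ X : Matrix (Fin M ⊕ Fin M) (Fin M ⊕ Fin M) ℝ,
        Xᵀ = -X → (X.map f)ᴴ = -(X.map f) := by
      intro X hX
      have h1 : (X.map f)ᴴ = (star X).map f := (map_star_RC X).symm
      rw [h1]
      have h2 : star X = -X := by
        change Xᴴ = -X
        have : Xᴴ = Xᵀ := by
          ext i j
          simp [Matrix.conjTranspose_apply]
        rw [this, hX]
      rw [h2]
      ext i j
      simp [Matrix.map_apply]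
    have hK'skew : K'ᴴ = -K' := hstK K hKskew
    have hD'skew : D'ᴴ = -D' := hstK 𝒟 hDskew
    set P : Matrix (Fin M ⊕ Fin M) (Fin M ⊕ Fin M) ℂ := (ω + 1) • 1 + K' with hPdef
    set Pm : Matrix (Fin M ⊕ Fin M) (Fin M ⊕ Fin M) ℂ := (ω - 1) • 1 + -K' with hPmdef
    set Q : Matrix (Fin M ⊕ Fin M) (Fin M ⊕ Fin M) ℂ := ω • 1 + D' with hQdef
    set Qm : Matrix (Fin M ⊕ Fin M) (Fin M ⊕ Fin M) ℂ := ω • 1 + -D' with hQmdef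
    have h𝒯K : 𝒯 = 1 + K := by
      rw [h𝒯, hKdef, ← fromBlocks_one, fromBlocks_add]
      simp
    have hPmap : (ω • 1 + 𝒯).map f = P := by
      have h1 : ω • (1 : Matrix (Fin M ⊕ Fin M) (Fin M ⊕ Fin M) ℝ) + 𝒯 = (ω + 1) • 1 + K := by
        rw [h𝒯K, add_smul, one_smul, add_assoc]
      rw [h1, Matrix.map_add _ (map_add f), map_smul_RC,
        Matrix.map_one _ (map_zero f) (map_one f), hPdef, hK'def]
    have hQmap : (ω • 1 + 𝒟).map f = Q := by
      rw [Matrix.map_add _ (map_add f), map_smul_RC,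
        Matrix.map_one _ (map_zero f) (map_one f), hQdef, hD'def]
    have hω1 : ω + 1 ≠ 0 := by linarith
    have hdetP : det P ≠ 0 := key_det hK'skew hω1
    have hdetQ : det Q ≠ 0 := key_det hD'skew (ne_of_gt hω)
    have hdetF : IsUnit ℱ.det := by
      have hPR : det (ω • 1 + 𝒯) ≠ 0 := by
        intro h
        apply hdetP
        have hmd := RingHom.map_det f (ω • 1 + 𝒯)
        rw [RingHom.mapMatrix_apply] at hmd
        rw [← hPmap, ← hmd, h, map_zero]
      have hQR : det (ω • 1 + 𝒟) ≠ 0 := by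
        intro h
        apply hdetQ
        have hmd := RingHom.map_det f (ω • 1 + 𝒟)
        rw [RingHom.mapMatrix_apply] at hmd
        rw [← hQmap, ← hmd, h, map_zero]
      rw [hℱ, Matrix.det_smul, det_mul]
      apply isUnit_iff_ne_zero.mpr
      apply mul_ne_zero (pow_ne_zero _ (by positivity)) (mul_ne_zero hPR hQR)
    -- eigenvector
    rw [spectrum.mem_iff] at hη
    have hdet0 : det ((η • 1 : Matrix (Fin M ⊕ Fin M) (Fin M ⊕ Fin M) ℂ)
        - (ℱ⁻¹ * ℛ).map f) = 0 := by
      by_contra h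
      apply hη
      rw [Algebra.algebraMap_eq_smul_one]
      exact (Matrix.isUnit_iff_isUnit_det _).mpr (isUnit_iff_ne_zero.mpr h)
    obtain ⟨v, hv0, hvz⟩ := Matrix.exists_mulVec_eq_zero_iff.mpr hdet0
    have heig : (ℱ⁻¹ * ℛ).map f *ᵥ v = η • v := by
      rw [sub_mulVec, smul_mulVec, one_mulVec] at hvz
      exact (sub_eq_zero.mp hvz).symm
    have hFA : η • (ℱ.map f *ᵥ v) = ℛ.map f *ᵥ v := by
      have h1 : ℱ.map f *ᵥ ((ℱ⁻¹ * ℛ).map f *ᵥ v) = ℛ.map f *ᵥ v := by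
        rw [mulVec_mulVec, ← Matrix.map_mul, ← mul_assoc, Matrix.mul_nonsing_inv _ hdetF,
          one_mul]
      rw [← h1, heig, mulVec_smul]
    have hFv : ℱ.map f = (1 / (2 * ω)) • (P * Q) := by
      rw [hℱ, map_smul_RC, Matrix.map_mul, hPmap, hQmap]
    have hstep : η • ((P * Q) *ᵥ v) = (2 * ω) • (ℛ.map f *ᵥ v) := by
      have h2 : (2 * ω) • (η • (ℱ.map f *ᵥ v)) = (2 * ω) • (ℛ.map f *ᵥ v) := by
        rw [hFA]
      rw [hFv, smul_mulVec, smul_comm ((2:ℝ) * ω) η, smul_smul] at h2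
      have h3 : (2 * ω) * (1 / (2 * ω)) = (1:ℝ) := by
        field_simp
      rw [h3, one_smul] at h2
      exact h2
    have hR' : ℛ.map f = 1 + K' + D' := by
      rw [hℛ, Matrix.map_add _ (map_add f), h𝒯K, Matrix.map_add _ (map_add f),
        Matrix.map_one _ (map_zero f) (map_one f), hK'def, hD'def]
    have hPQ : P * Q - (2 * ω) • (1 + K' + D') = Pm * Qm := by
      rw [hPdef, hQdef, hPmdef, hQmdef]
      simp only [mul_add, add_mul, smul_mul_assoc, mul_smul_comm, mul_one, one_mul,
        smul_smul, neg_mul, mul_neg, smul_add, smul_neg, neg_neg]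
      module
    have hmain : P *ᵥ ((1 - η) • (Q *ᵥ v)) = (Pm * Qm) *ᵥ v := by
      have h1 : (P * Q) *ᵥ v - (2 * ω) • ((1 + K' + D') *ᵥ v) = (Pm * Qm) *ᵥ v := by
        rw [← smul_mulVec, ← sub_mulVec, hPQ]
      rw [← h1, ← hR']
      rw [mulVec_smul, ← mulVec_mulVec, sub_smul, one_smul]
      rw [← hstep]
      congr 1
      rw [mulVec_mulVec]
    set y : (Fin M ⊕ Fin M) → ℂ := P⁻¹ *ᵥ (Qm *ᵥ v) with hydef
    have hPy : P *ᵥ y = Qm *ᵥ v := by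
      rw [hydef, mulVec_mulVec, Matrix.mul_nonsing_inv _ (isUnit_iff_ne_zero.mpr hdetP),
        one_mulVec]
    have hcomm : Pm * P = P * Pm := by
      rw [hPdef, hPmdef]
      simp only [mul_add, add_mul, smul_mul_assoc, mul_smul_comm, mul_one, one_mul,
        smul_smul, neg_mul, mul_neg, smul_add, smul_neg, neg_neg]
      module
    have hPmQm : (Pm * Qm) *ᵥ v = P *ᵥ (Pm *ᵥ y) := by
      calc (Pm * Qm) *ᵥ v = Pm *ᵥ (Qm *ᵥ v) := (mulVec_mulVec _ _ _).symm
        _ = Pm *ᵥ (P *ᵥ y) := by rw [hPy]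
        _ = (Pm * P) *ᵥ y := mulVec_mulVec _ _ _
        _ = (P * Pm) *ᵥ y := by rw [hcomm]
        _ = P *ᵥ (Pm *ᵥ y) := (mulVec_mulVec _ _ _).symm
    have hkey : (1 - η) • (Q *ᵥ v) = Pm *ᵥ y := by
      have h1 : P *ᵥ ((1 - η) • (Q *ᵥ v)) = P *ᵥ (Pm *ᵥ y) := by rw [hmain, hPmQm]
      have h2 := congrArg (fun z => P⁻¹ *ᵥ z) h1
      simpa only [mulVec_mulVec, ← Matrix.mul_assoc,
        Matrix.nonsing_inv_mul _ (isUnit_iff_ne_zero.mpr hdetP), one_mulVec,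
        Matrix.mul_one, Matrix.one_mul] using h2
    -- norms
    have n1 : nsq (Q *ᵥ v) = ω ^ 2 * nsq v + nsq (D' *ᵥ v) := key_nsq D' hD'skew ω v
    have hnegskew : ∀ X : Matrix (Fin M ⊕ Fin M) (Fin M ⊕ Fin M) ℂ,
        Xᴴ = -X → (-X)ᴴ = -(-X) := by
      intro X hX
      rw [conjTranspose_neg, hX, neg_neg]
    have n2 : nsq (Qm *ᵥ v) = ω ^ 2 * nsq v + nsq (D' *ᵥ v) := by
      have h := key_nsq (-D') (hnegskew D' hD'skew) ω v
      rwa [neg_mulVec, nsq_neg] at h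
    have n3 : nsq (P *ᵥ y) = (ω + 1) ^ 2 * nsq y + nsq (K' *ᵥ y) :=
      key_nsq K' hK'skew (ω + 1) y
    have n4 : nsq (Pm *ᵥ y) = (ω - 1) ^ 2 * nsq y + nsq (K' *ᵥ y) := by
      have h := key_nsq (-K') (hnegskew K' hK'skew) (ω - 1) y
      rwa [neg_mulVec, nsq_neg] at h
    -- b ≤ lm² a
    have hb : nsq (K' *ᵥ y) ≤ lm ^ 2 * nsq y := by
      have hKmap : K' = fromBlocks 0 (T.map f) (-(T.map f)) 0 := by
        rw [hK'def, hKdef, fromBlocks_map]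
        have hneg : (-T).map ⇑f = -(T.map ⇑f) := by ext i j; simp [Matrix.map_apply]
        have h0 : (0 : Matrix (Fin M) (Fin M) ℝ).map ⇑f = 0 := by
          ext i j; simp [Matrix.map_apply]
        rw [hneg, h0]
      rw [hKmap, fromBlocks_mulVec]
      simp only [zero_mulVec, zero_add, add_zero, neg_mulVec]
      have h1 := hlmvec (y ∘ Sum.inl)
      have h2 := hlmvec (y ∘ Sum.inr)
      have hsum : nsq (Sum.elim (T.map f *ᵥ (y ∘ Sum.inr)) (-(T.map f *ᵥ (y ∘ Sum.inl))))
          = nsq (T.map f *ᵥ (y ∘ Sum.inr)) + nsq (T.map f *ᵥ (y ∘ Sum.inl)) := by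
        simp [nsq, Fintype.sum_sum_type]
      rw [hsum]
      have hy : nsq y = nsq (y ∘ Sum.inl) + nsq (y ∘ Sum.inr) := by
        simp only [nsq, Fintype.sum_sum_type]
        rfl
      rw [hy]
      have hr : lm ^ 2 * (nsq (y ∘ Sum.inl) + nsq (y ∘ Sum.inr))
          = lm ^ 2 * nsq (y ∘ Sum.inl) + lm ^ 2 * nsq (y ∘ Sum.inr) := by ring
      rw [hr]
      linarith
    -- final numeric
    have hNpos : 0 < nsq (Q *ᵥ v) := by
      rw [n1]
      have h1 := mul_pos (pow_pos hω 2) (nsq_pos hv0)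
      have h2 := nsq_nonneg (D' *ᵥ v)
      linarith
    have hQQm : nsq (P *ᵥ y) = nsq (Q *ᵥ v) := by rw [hPy, n2, n1]
    have heq1 : Complex.normSq (1 - η) * nsq (Q *ᵥ v) = (ω - 1) ^ 2 * nsq y + nsq (K' *ᵥ y) := by
      rw [← n4, ← hkey, nsq_smul]
    have heq2 : nsq (Q *ᵥ v) = (ω + 1) ^ 2 * nsq y + nsq (K' *ᵥ y) := by
      rw [← hQQm, n3]
    have hfin : Complex.normSq (1 - η) ≤ ((ω - 1) ^ 2 + lm ^ 2) / ((ω + 1) ^ 2 + lm ^ 2) := by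
      rw [le_div_iff₀ hdenpos]
      exact numeric_bound ω lm (nsq y) (nsq (K' *ᵥ y)) (Complex.normSq (1 - η)) (nsq (Q *ᵥ v))
        hω (nsq_nonneg y) (nsq_nonneg _) hb hNpos heq1 heq2
    calc ‖1 - η‖ = Real.sqrt (Complex.normSq (1 - η)) := by rw [Complex.norm_def]
      _ ≤ σ := by
          rw [hσdef]
          exact Real.sqrt_le_sqrt hfin
end
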